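/- arXiv:1210.4090 — 7 statements merged into one kernel-verified Lean document; each statement's English description precedes it below -/
import Mathlib

section
/- Let f : [a,b] → ℝ be convex and g : [c,d] → ℝ be affine with slope g'. Let α = inf{ x ∈ [a,b] : the right slope of f at x is ≥ g' } (with α = b if no such point exists). Then the (min,plus)-convolution f * g : [a+c, b+d] → ℝ is given by (f*g)(x) = f(x-c) + g(c) for a+c ≤ x ≤ α+c, (f*g)(x) = f(α) + g(x-α) for α+c < x ≤ α+d, and (f*g)(x) = f(x-d) + g(d) for α+d < x ≤ b+d; in particular f * g is convex. -/
/-!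
Tilting by the slope `s` is the whole idea: since `G` is affine,
`F y + G (x - y) = φ y + (G c + s * (x - c))` with `φ y = F y - s * y`, so computing `(f * g) x`
means minimising the convex function `φ` over the window `[a, b] ∩ [x - d, x - c]`.
The point `α` is the leftmost minimiser of `φ` on `[a, b]` (continuity makes the infimum defining
it a minimum); `φ` decreases to the left of `α` and increases to its right, so the minimum over
the window is attained at the point of the window nearest to `α`.
Convexity holds because an infimal convolution of convex functions whose infima are attained is
convex.
-/

open Set Filter Topology

section Monotone

variable {𝕜 β : Type*} [Field 𝕜] [LinearOrder 𝕜] [IsStrictOrderedRing 𝕜] [AddCommMonoid β]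
  [LinearOrder β] [IsOrderedCancelAddMonoid β] [Module 𝕜 β] [PosSMulStrictMono 𝕜 β]
  {s : Set 𝕜} {φ : 𝕜 → β} {m : 𝕜}

theorem ConvexOn.antitoneOn_of_isMinOn (hφ : ConvexOn 𝕜 s φ) (hmin : IsMinOn φ s m) (hm : m ∈ s) :
    AntitoneOn φ (s ∩ Iic m) := by
  intro u hu v hv huv
  rcases hv.2.eq_or_lt with rfl | hvm
  · exact hmin hu.1
  · exact hφ.le_left_of_right_le'' hu.1 hm huv hvm (hmin hv.1)

theorem ConvexOn.monotoneOn_of_isMinOn (hφ : ConvexOn 𝕜 s φ) (hmin : IsMinOn φ s m) (hm : m ∈ s) :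
    MonotoneOn φ (s ∩ Ici m) := by
  intro u hu v hv huv
  rcases hu.2.eq_or_lt with rfl | hmu
  · exact hmin hv.1
  · exact hφ.le_right_of_left_le'' hm hv.1 hmu huv (hmin hu.1)

end Monotone

section RightMinima

variable {φ : ℝ → ℝ} {a b : ℝ}

def rightMinima (φ : ℝ → ℝ) (a b : ℝ) : Set ℝ := {x | x ∈ Icc a b ∧ ∀ y ∈ Ioc x b, φ x ≤ φ y}

theorem right_mem_rightMinima (hab : a ≤ b) : b ∈ rightMinima φ a b :=
  ⟨right_mem_Icc.2 hab, fun _ hy => absurd hy.2 hy.1.not_ge⟩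

theorem bddBelow_rightMinima : BddBelow (rightMinima φ a b) := ⟨a, fun _ hx => hx.1.1⟩

theorem sInf_rightMinima_mem_Icc (hab : a ≤ b) : sInf (rightMinima φ a b) ∈ Icc a b :=
  ⟨le_csInf ⟨b, right_mem_rightMinima hab⟩ fun _ hx => hx.1.1,
    csInf_le bddBelow_rightMinima (right_mem_rightMinima hab)⟩

theorem ContinuousOn.sInf_rightMinima_mem (hab : a ≤ b) (hφ : ContinuousOn φ (Icc a b)) :
    sInf (rightMinima φ a b) ∈ rightMinima φ a b := by
  have hα := sInf_rightMinima_mem_Icc (φ := φ) hab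
  refine ⟨hα, fun y hy => ?_⟩
  obtain ⟨u, -, hu, huS⟩ :=
    exists_seq_tendsto_sInf ⟨b, right_mem_rightMinima hab⟩ (bddBelow_rightMinima (φ := φ))
  have hφu : Tendsto (φ ∘ u) atTop (𝓝 (φ (sInf (rightMinima φ a b)))) :=
    (hφ _ hα).tendsto.comp (tendsto_nhdsWithin_iff.2 ⟨hu, .of_forall fun n => (huS n).1⟩)
  refine le_of_tendsto hφu ?_
  filter_upwards [hu.eventually (gt_mem_nhds hy.1)] with n hn
  exact (huS n).2 y ⟨hn, hy.2⟩

theorem ContinuousOn.isMinOn_sInf_rightMinima (hab : a ≤ b) (hφ : ContinuousOn φ (Icc a b)) :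
    IsMinOn φ (Icc a b) (sInf (rightMinima φ a b)) := by
  obtain ⟨m, hm, hmin⟩ := isCompact_Icc.exists_isMinOn (nonempty_Icc.2 hab) hφ
  have hαm : sInf (rightMinima φ a b) ≤ m :=
    csInf_le bddBelow_rightMinima ⟨hm, fun y hy => hmin ⟨hm.1.trans hy.1.le, hy.2⟩⟩
  intro t ht
  rcases hαm.eq_or_lt with hαm | hαm
  · exact hαm ▸ hmin ht
  · exact ((hφ.sInf_rightMinima_mem hab).2 m ⟨hαm, hm.2⟩).trans (hmin ht)

end RightMinima

theorem iInf_ite_add_ite_eq_of_isLeast {E : Type*} [Sub E] {s t : Set E} {F G : E → ℝ}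
    [DecidablePred (· ∈ s)] [DecidablePred (· ∈ t)]
    {x : E} {v : ℝ} (hv : IsLeast ((fun y => F y + G (x - y)) '' {y | y ∈ s ∧ x - y ∈ t}) v) :
    ⨅ y, ((if y ∈ s then (F y : EReal) else ⊤) + if x - y ∈ t then (G (x - y) : EReal) else ⊤)
      = v := by
  refine le_antisymm ?_ (le_iInf fun y => ?_)
  · obtain ⟨⟨y, ⟨hys, hyt⟩, rfl⟩, -⟩ := hv
    exact (iInf_le _ y).trans_eq (by simp [hys, hyt])
  · by_cases hys : y ∈ s
    · by_cases hyt : x - y ∈ t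
      · simp only [if_pos hys, if_pos hyt, ← EReal.coe_add, EReal.coe_le_coe_iff]
        exact hv.2 ⟨y, ⟨hys, hyt⟩, rfl⟩
      · simp [hys, hyt]
    · split_ifs <;> simp

section InfimalConvolution

variable {E : Type*} [AddCommGroup E] [Module ℝ E] {s t : Set E} {F G : E → ℝ}

theorem ConvexOn.of_isLeast_add_sub {u : Set E} {H : E → ℝ} (hF : ConvexOn ℝ s F)
    (hG : ConvexOn ℝ t G) (hu : Convex ℝ u)
    (hH : ∀ x ∈ u, IsLeast ((fun y => F y + G (x - y)) '' {y | y ∈ s ∧ x - y ∈ t}) (H x)) :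
    ConvexOn ℝ u H := by
  refine ⟨hu, fun x₁ hx₁ x₂ hx₂ p q hp hq hpq => ?_⟩
  obtain ⟨⟨y₁, ⟨hy₁s, hy₁t⟩, hy₁⟩, -⟩ := hH x₁ hx₁
  obtain ⟨⟨y₂, ⟨hy₂s, hy₂t⟩, hy₂⟩, -⟩ := hH x₂ hx₂
  have hsub : p • x₁ + q • x₂ - (p • y₁ + q • y₂) = p • (x₁ - y₁) + q • (x₂ - y₂) := by
    simp only [smul_sub]; abel
  have hmem : p • y₁ + q • y₂ ∈ {y | y ∈ s ∧ p • x₁ + q • x₂ - y ∈ t} :=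
    ⟨hF.1 hy₁s hy₂s hp hq hpq, hsub ▸ hG.1 hy₁t hy₂t hp hq hpq⟩
  calc H (p • x₁ + q • x₂)
      ≤ F (p • y₁ + q • y₂) + G (p • (x₁ - y₁) + q • (x₂ - y₂)) :=
        hsub ▸ (hH _ (hu hx₁ hx₂ hp hq hpq)).2 ⟨_, hmem, rfl⟩
    _ ≤ (p • F y₁ + q • F y₂) + (p • G (x₁ - y₁) + q • G (x₂ - y₂)) :=
        add_le_add (hF.2 hy₁s hy₂s hp hq hpq) (hG.2 hy₁t hy₂t hp hq hpq)
    _ = p • H x₁ + q • H x₂ := by rw [← hy₁, ← hy₂]; simp only [smul_eq_mul]; ring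

end InfimalConvolution

theorem isLeast_add_sub_of_affine {a b c d s α x : ℝ} {F G : ℝ → ℝ} (hcd : c ≤ d)
    (hF : ConvexOn ℝ (Icc a b) F) (hG : ∀ x, G x = G c + s * (x - c)) (hα : α ∈ Icc a b)
    (hmin : IsMinOn (fun y => F y - s * y) (Icc a b) α) (hx : x ∈ Icc (a + c) (b + d)) :
    IsLeast ((fun y => F y + G (x - y)) '' {y | y ∈ Icc a b ∧ x - y ∈ Icc c d})
      (if x ≤ α + c then F (x - c) + G c
        else if x ≤ α + d then F α + G (x - α) else F (x - d) + G d) := by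
  set φ : ℝ → ℝ := fun y => F y - s * y
  have hφ : ConvexOn ℝ (Icc a b) φ := hF.sub ((LinearMap.mulLeft ℝ s).concaveOn (convex_Icc a b))
  have hanti := hφ.antitoneOn_of_isMinOn hmin hα
  have hmono := hφ.monotoneOn_of_isMinOn hmin hα
  have hleast : ∀ t, t ∈ Icc a b → x - t ∈ Icc c d →
      (∀ y ∈ Icc a b, x - y ∈ Icc c d → φ t ≤ φ y) →
      IsLeast ((fun y => F y + G (x - y)) '' {y | y ∈ Icc a b ∧ x - y ∈ Icc c d})
        (F t + G (x - t)) := fun t hta htc ht =>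
    ⟨mem_image_of_mem _ ⟨hta, htc⟩, forall_mem_image.2 fun y ⟨hya, hyc⟩ => by
      have := ht y hya hyc
      simp only [φ] at this
      rw [hG (x - t), hG (x - y)]
      linarith⟩
  obtain ⟨hαa, hαb⟩ := hα
  obtain ⟨hxa, hxb⟩ := hx
  split_ifs with hxc hxd
  · have hxc' : x - c ≤ α := by linarith
    simpa only [sub_sub_cancel] using hleast (x - c) ⟨by linarith, by linarith⟩
      (by simpa using hcd) fun y hya hyc =>
        hanti ⟨hya, mem_Iic.2 (by linarith [hyc.1])⟩
          ⟨⟨by linarith, by linarith⟩, mem_Iic.2 hxc'⟩ (by linarith [hyc.1])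
  · exact hleast α ⟨hαa, hαb⟩ ⟨by linarith, by linarith⟩ fun y hya _ => hmin hya
  · simpa only [sub_sub_cancel] using hleast (x - d) ⟨by linarith, by linarith⟩
      (by simpa using hcd) fun y hya hyc =>
        hmono ⟨⟨by linarith, by linarith⟩, mem_Ici.2 (by linarith)⟩
          ⟨hya, mem_Ici.2 (by linarith [hyc.2])⟩ (by linarith [hyc.2])

/-- Convolution of a convex function by an affine function: with
`α = inf { x ∈ [a,b] : every forward slope of f at x is ≥ g' }` (so `α = b` when no
interior point qualifies), the (min,plus)-convolution `f * g` on `[a+c, b+d]` equals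
`f(x-c) + g(c)` on `[a+c, α+c]`, `f(α) + g(x-α)` on `(α+c, α+d]`, and `f(x-d) + g(d)`
on `(α+d, b+d]`; in particular `f * g` is convex. -/
theorem minplus_convolution_convex_affine (a b c d s : ℝ) (hab : a < b) (hcd : c < d)
    (F G : ℝ → ℝ) (hF : ConvexOn ℝ (Set.Icc a b) F)
    (hFc : ContinuousOn F (Set.Icc a b))
    (hG : ∀ x, G x = G c + s * (x - c)) :
    let f : ℝ → EReal := fun x => if x ∈ Set.Icc a b then (F x : EReal) else ⊤
    let g : ℝ → EReal := fun x => if x ∈ Set.Icc c d then (G x : EReal) else ⊤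
    let h : ℝ → EReal := fun x => ⨅ y : ℝ, f y + g (x - y)
    let α : ℝ := sInf {x | x ∈ Set.Icc a b ∧ ∀ y ∈ Set.Ioc x b, s * (y - x) ≤ F y - F x}
    let H : ℝ → ℝ := fun x =>
      if x ≤ α + c then F (x - c) + G c
      else if x ≤ α + d then F α + G (x - α)
      else F (x - d) + G d
    (∀ x ∈ Set.Icc (a + c) (b + d), h x = (H x : EReal)) ∧
      ConvexOn ℝ (Set.Icc (a + c) (b + d)) H := by
  intro f g h α H
  set φ : ℝ → ℝ := fun y => F y - s * y
  have hα : α = sInf (rightMinima φ a b) := by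
    refine congrArg sInf (ext fun x => and_congr_right fun _ => forall₂_congr fun y _ => ?_)
    constructor <;> intro hy <;> dsimp only [φ] at hy ⊢ <;> linarith
  have hφc : ContinuousOn φ (Icc a b) := hFc.sub (continuous_const_mul s).continuousOn
  have hG_convex : ConvexOn ℝ (Icc c d) G :=
    (((LinearMap.mulLeft ℝ s).convexOn (convex_Icc c d)).add_const (G c - s * c)).congr
      fun x _ => by simp only [Pi.add_apply, LinearMap.mulLeft_apply, hG x]; ring
  have hH : ∀ x ∈ Icc (a + c) (b + d),
      IsLeast ((fun y => F y + G (x - y)) '' {y | y ∈ Icc a b ∧ x - y ∈ Icc c d}) (H x) :=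
    fun x hx => isLeast_add_sub_of_affine hcd.le hF hG
      (hα ▸ sInf_rightMinima_mem_Icc hab.le) (hα ▸ hφc.isMinOn_sInf_rightMinima hab.le) hx
  exact ⟨fun x hx => iInf_ite_add_ite_eq_of_isLeast (hH x hx),
    hF.of_isLeast_add_sub hG_convex (convex_Icc _ _) hH⟩
end

section
/- Discrete convex-convex convolution algorithm correctness: let f : {0,...,n} → ℝ and g : {0,...,m} → ℝ be convex sequences (i.e., their increments r_i = f(i+1)-f(i) and ρ_j = g(j+1)-g(j) are nondecreasing). Then the sequence h : {0,...,n+m} → ℝ defined by h(0) = f(0) + g(0) and whose successive increments are the multiset {r_0,...,r_{n-1}, ρ_0,...,ρ_{m-1}} sorted in nondecreasing order satisfies h(k) = min_{i+j=k, 0≤i≤n, 0≤j≤m} (f(i) + g(j)) for all k. -/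
/-!
Greedy merging. Walk along `k` keeping indices `i + j = k` with `h k = f i + g j` such that
the increments of `h` from `k` on are exactly the increments of `f` from `i` on together with
those of `g` from `j` on. All three increment sequences are nondecreasing, so the next increment
of `h` is the smallest remaining one, `min (r i) (ρ j)`, and the walk advances `i` or `j`.
Minimality propagates: a split `i' + j' = k + 1` has `i < i'` or `j < j'`, and the increment
just taken is at most `r (i' - 1)`, resp. `ρ (j' - 1)`.
-/

namespace DiscreteConvolution

open Multiset

def incr (u : ℕ → ℝ) (t : ℕ) : ℝ := u (t + 1) - u t

def increments (u : ℕ → ℝ) (a b : ℕ) : Multiset ℝ := (Ico a b).map (incr u)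

def minPlusCandidates (f g : ℕ → ℝ) (n m k : ℕ) : Set ℝ :=
  {z | ∃ i j : ℕ, i + j = k ∧ i ≤ n ∧ j ≤ m ∧ z = f i + g j}

lemma monotoneOn_incr_of_convex {u : ℕ → ℝ} {N : ℕ}
    (hu : ∀ i, i + 1 < N → u (i + 1) - u i ≤ u (i + 2) - u (i + 1)) :
    MonotoneOn (incr u) (Set.Iio N) :=
  monotoneOn_of_le_succ Set.ordConnected_Iio fun a _ _ ha => by
    simpa [incr, Order.succ_eq_add_one, add_assoc] using hu a ha

lemma increments_zero_eq (u : ℕ → ℝ) (N : ℕ) :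
    increments u 0 N = (range N).map fun t => u (t + 1) - u t := by
  rw [increments, ← Finset.range_val, Finset.range_eq_Ico]; rfl

lemma increments_eq_cons (u : ℕ → ℝ) {a b : ℕ} (hab : a < b) :
    increments u a b = incr u a ::ₘ increments u (a + 1) b := by
  rw [increments, ← Ioo_cons_left hab, map_cons]; rfl

lemma incr_mem_increments (u : ℕ → ℝ) {a b t : ℕ} (hat : a ≤ t) (htb : t < b) :
    incr u t ∈ increments u a b :=
  mem_map_of_mem _ (mem_Ico.2 ⟨hat, htb⟩)

lemma lt_of_mem_increments {u : ℕ → ℝ} {a b : ℕ} {x : ℝ} (hx : x ∈ increments u a b) : a < b := by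
  obtain ⟨t, ht, -⟩ := mem_map.1 hx
  exact (mem_Ico.1 ht).1.trans_lt (mem_Ico.1 ht).2

lemma incr_le_of_mem_increments {u : ℕ → ℝ} {a b : ℕ} {x : ℝ}
    (hu : MonotoneOn (incr u) (Set.Iio b)) (hx : x ∈ increments u a b) : incr u a ≤ x := by
  obtain ⟨t, ht, rfl⟩ := mem_map.1 hx
  obtain ⟨hat, htb⟩ := mem_Ico.1 ht
  exact hu (hat.trans_lt htb) htb hat


variable {f g h : ℕ → ℝ} {n m k i j : ℕ}

/-- The state of the merge after `k` steps, having consumed `i` increments of `f` and `j` of `g`. -/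
structure MergeState (f g h : ℕ → ℝ) (n m k i j : ℕ) : Prop where
  add_eq : i + j = k
  le_left : i ≤ n
  le_right : j ≤ m
  apply_eq : h k = f i + g j
  mem_lowerBounds : h k ∈ lowerBounds (minPlusCandidates f g n m k)
  increments_eq : increments h k (n + m) = increments f i n + increments g j m

lemma MergeState.isLeast (s : MergeState f g h n m k i j) :
    IsLeast (minPlusCandidates f g n m k) (h k) :=
  ⟨⟨i, j, s.add_eq, s.le_left, s.le_right, s.apply_eq⟩, s.mem_lowerBounds⟩

lemma mergeState_zero (h0 : h 0 = f 0 + g 0)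
    (hmerge : (range (n + m)).map (fun k => h (k + 1) - h k) =
      (range n).map (fun i => f (i + 1) - f i) + (range m).map (fun j => g (j + 1) - g j)) :
    MergeState f g h n m 0 0 0 where
  add_eq := rfl
  le_left := n.zero_le
  le_right := m.zero_le
  apply_eq := h0
  mem_lowerBounds := by
    rintro z ⟨i, j, hij, -, -, rfl⟩
    obtain ⟨rfl, rfl⟩ : i = 0 ∧ j = 0 := by omega
    exact h0.le
  increments_eq := by simpa only [increments_zero_eq] using hmerge

lemma MergeState.mem_lowerBounds_succ (s : MergeState f g h n m k i j)
    (hmin : ∀ x ∈ increments f i n + increments g j m, incr h k ≤ x) :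
    h (k + 1) ∈ lowerBounds (minPlusCandidates f g n m (k + 1)) := by
  rintro z ⟨i', j', hij', hi', hj', rfl⟩
  have hij := s.add_eq
  rcases (by omega : i < i' ∨ j < j') with hi | hj
  · obtain ⟨a, rfl⟩ : ∃ a, i' = a + 1 := ⟨i' - 1, by omega⟩
    have hprev : h k ≤ f a + g j' := s.mem_lowerBounds ⟨a, j', by omega, by omega, hj', rfl⟩
    have hincr : incr h k ≤ incr f a :=
      hmin _ (mem_add.2 (Or.inl (incr_mem_increments f (by omega) (by omega))))
    simp only [incr] at hincr
    linarith
  · obtain ⟨b, rfl⟩ : ∃ b, j' = b + 1 := ⟨j' - 1, by omega⟩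
    have hprev : h k ≤ f i' + g b := s.mem_lowerBounds ⟨i', b, by omega, hi', by omega, rfl⟩
    have hincr : incr h k ≤ incr g b :=
      hmin _ (mem_add.2 (Or.inr (incr_mem_increments g (by omega) (by omega))))
    simp only [incr] at hincr
    linarith

lemma MergeState.succ_left (s : MergeState f g h n m k i j) (hk : k < n + m) (hi : i < n)
    (hd : incr h k = incr f i) (hmin : ∀ x ∈ increments f i n + increments g j m, incr h k ≤ x) :
    MergeState f g h n m (k + 1) (i + 1) j where
  add_eq := by rw [← s.add_eq]; ring
  le_left := hi
  le_right := s.le_right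
  apply_eq := by
    have := s.apply_eq
    simp only [incr] at hd
    linarith
  mem_lowerBounds := s.mem_lowerBounds_succ hmin
  increments_eq := by
    have := s.increments_eq
    rwa [increments_eq_cons h hk, increments_eq_cons f hi, hd, cons_add, cons_inj_right] at this

lemma MergeState.succ_right (s : MergeState f g h n m k i j) (hk : k < n + m) (hj : j < m)
    (hd : incr h k = incr g j) (hmin : ∀ x ∈ increments f i n + increments g j m, incr h k ≤ x) :
    MergeState f g h n m (k + 1) i (j + 1) where
  add_eq := by rw [← s.add_eq]; ring
  le_left := s.le_left
  le_right := hj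
  apply_eq := by
    have := s.apply_eq
    simp only [incr] at hd
    linarith
  mem_lowerBounds := s.mem_lowerBounds_succ hmin
  increments_eq := by
    have := s.increments_eq
    rwa [increments_eq_cons h hk, increments_eq_cons g hj, hd, add_cons, cons_inj_right] at this

lemma MergeState.exists_succ (hf : MonotoneOn (incr f) (Set.Iio n))
    (hg : MonotoneOn (incr g) (Set.Iio m)) (hh : MonotoneOn (incr h) (Set.Iio (n + m)))
    (s : MergeState f g h n m k i j) (hk : k < n + m) :
    ∃ i' j', MergeState f g h n m (k + 1) i' j' := by
  have hmin : ∀ x ∈ increments f i n + increments g j m, incr h k ≤ x := by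
    rw [← s.increments_eq]
    exact fun x hx => incr_le_of_mem_increments hh hx
  have hmem : incr h k ∈ increments f i n + increments g j m :=
    s.increments_eq ▸ incr_mem_increments h le_rfl hk
  rcases mem_add.1 hmem with hmemf | hmemg
  · have hi := lt_of_mem_increments hmemf
    have hd : incr h k = incr f i := le_antisymm
      (hmin _ (mem_add.2 (Or.inl (incr_mem_increments f le_rfl hi))))
      (incr_le_of_mem_increments hf hmemf)
    exact ⟨i + 1, j, s.succ_left hk hi hd hmin⟩
  · have hj := lt_of_mem_increments hmemg
    have hd : incr h k = incr g j := le_antisymm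
      (hmin _ (mem_add.2 (Or.inr (incr_mem_increments g le_rfl hj))))
      (incr_le_of_mem_increments hg hmemg)
    exact ⟨i, j + 1, s.succ_right hk hj hd hmin⟩

lemma exists_mergeState (hf : MonotoneOn (incr f) (Set.Iio n))
    (hg : MonotoneOn (incr g) (Set.Iio m)) (hh : MonotoneOn (incr h) (Set.Iio (n + m)))
    (s₀ : MergeState f g h n m 0 0 0) :
    ∀ k ≤ n + m, ∃ i j, MergeState f g h n m k i j := by
  intro k hk
  induction k with
  | zero => exact ⟨0, 0, s₀⟩
  | succ k ih =>
    obtain ⟨i, j, s⟩ := ih (by omega)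
    exact s.exists_succ hf hg hh hk

end DiscreteConvolution

/-- Correctness of the discrete convex-convex (min,plus)-convolution algorithm:
if `f : {0,…,n} → ℝ` and `g : {0,…,m} → ℝ` are convex sequences and `h` is the
sequence with `h 0 = f 0 + g 0`, nondecreasing increments, whose multiset of
increments is the merge of those of `f` and `g` (i.e. sorted in nondecreasing
order), then `h k = min_{i+j=k} (f i + g j)`. -/
theorem discrete_convex_convolution (n m : ℕ) (f g h : ℕ → ℝ)
    (hf : ∀ i, i + 1 < n → f (i + 1) - f i ≤ f (i + 2) - f (i + 1))
    (hg : ∀ j, j + 1 < m → g (j + 1) - g j ≤ g (j + 2) - g (j + 1))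
    (h0 : h 0 = f 0 + g 0)
    (hsorted : ∀ k, k + 1 < n + m → h (k + 1) - h k ≤ h (k + 2) - h (k + 1))
    (hmerge : (Multiset.range (n + m)).map (fun k => h (k + 1) - h k) =
        (Multiset.range n).map (fun i => f (i + 1) - f i) +
          (Multiset.range m).map (fun j => g (j + 1) - g j)) :
    ∀ k ≤ n + m,
      h k = sInf {z | ∃ i j : ℕ, i + j = k ∧ i ≤ n ∧ j ≤ m ∧ z = f i + g j} := by
  intro k hk
  open DiscreteConvolution in
  obtain ⟨i, j, s⟩ := exists_mergeState (monotoneOn_incr_of_convex hf)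
    (monotoneOn_incr_of_convex hg) (monotoneOn_incr_of_convex hsorted)
    (mergeState_zero h0 hmerge) k hk
  exact s.isLeast.csInf_eq.symm
end

section
/- The (min,plus)-convolution of a convex piecewise-affine function by a concave piecewise-affine function decomposes into three (possibly trivial) consecutive parts: a convex function, then a concave function, then a convex function. More precisely, if f : [a,b] → ℝ is convex piecewise affine and g : [c,d] → ℝ is concave piecewise affine, there exist β ≤ γ in [a+c, b+d] such that f * g restricted to [a+c, β] is convex, to [β, γ] is concave, and to [γ, b+d] is convex. -/
/-!
Write `H` for the convolution. Convexity of `F` makes the set of `x` at which the infimum defining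
`H x` is attained with `v = c` an initial segment `[a + c, β]`, on which `H x = F (x - c) + G c` is
convex; symmetrically `H x = F (x - d) + G d` on a final segment `[γ, b + d]`. Between `β` and `γ`,
each `H - k·id` attains its minimum over a subinterval at an endpoint: at an interior minimizer
`t = u + v`, the concave function `r ↦ F u + G (r - u) - k r` lies above `H - k·id` and touches it
at `t`, while it is strictly larger at both ends of its domain in the subinterval. This property
for every slope `k` is concavity.
-/

/-- `F` is piecewise affine on `[a,b]`: there is a finite subdivision of `[a,b]`
on each piece of which `F` is affine. -/
def IsPiecewiseAffineOn (F : ℝ → ℝ) (a b : ℝ) : Prop :=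
  ∃ (N : ℕ) (p : Fin (N + 1) → ℝ), Monotone p ∧ p 0 = a ∧ p (Fin.last N) = b ∧
    ∀ i : Fin N, ∃ s t : ℝ, ∀ x ∈ Set.Icc (p i.castSucc) (p i.succ), F x = s * x + t

open Set

theorem exists_mem_Icc_castSucc_succ {N : ℕ} {p : Fin (N + 1) → ℝ}
    (hp : p 0 < p (Fin.last N)) {x : ℝ} (hx : x ∈ Icc (p 0) (p (Fin.last N))) :
    ∃ j : Fin N, x ∈ Icc (p j.castSucc) (p j.succ) := by
  by_contra! hx_notMem
  have below : ∀ i : Fin (N + 1), i = 0 ∨ p i < x := by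
    refine Fin.induction (Or.inl rfl) fun j hj => Or.inr ?_
    have hle : p j.castSucc ≤ x := hj.elim (fun h => h ▸ hx.1) le_of_lt
    exact lt_of_not_ge fun h => hx_notMem j ⟨hle, h⟩
  rcases below (Fin.last N) with h | h
  · exact hp.ne (congrArg p h.symm)
  · exact h.not_ge hx.2

theorem IsPiecewiseAffineOn.continuousOn {F : ℝ → ℝ} {a b : ℝ}
    (hF : IsPiecewiseAffineOn F a b) (hab : a < b) : ContinuousOn F (Icc a b) := by
  obtain ⟨N, p, -, rfl, rfl, hcell⟩ := hF
  refine ((locallyFinite_of_finite _).continuousOn_iUnion (fun _ => isClosed_Icc) fun j => ?_).mono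
    fun x hx => mem_iUnion.2 (exists_mem_Icc_castSucc_succ hab hx)
  obtain ⟨s, t, hst⟩ := hcell j
  exact (continuous_const.mul continuous_id |>.add continuous_const).continuousOn.congr hst

theorem ConvexOn.map_add_sub_map_le {s : Set ℝ} {f : ℝ → ℝ} (hf : ConvexOn ℝ s f) {p q δ : ℝ}
    (hp : p ∈ s) (hq : q + δ ∈ s) (hpq : p ≤ q) (hδ : 0 ≤ δ) :
    f (p + δ) - f p ≤ f (q + δ) - f q := by
  rcases (add_nonneg (sub_nonneg.2 hpq) hδ).eq_or_lt with hT | hT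
  · obtain rfl : δ = 0 := by linarith
    obtain rfl : q = p := by linarith
    simp
  -- `p + δ` and `q` are the two convex combinations of `p` and `q + δ` with swapped weights.
  have hw : (q - p) / (q - p + δ) + δ / (q - p + δ) = 1 := by field_simp
  have h₁ := hf.2 hp hq (div_nonneg (sub_nonneg.2 hpq) hT.le) (div_nonneg hδ hT.le) hw
  have h₂ := hf.2 hp hq (div_nonneg hδ hT.le) (div_nonneg (sub_nonneg.2 hpq) hT.le)
    ((add_comm _ _).trans hw)
  simp only [smul_eq_mul] at h₁ h₂
  have e₁ : (q - p) / (q - p + δ) * p + δ / (q - p + δ) * (q + δ) = p + δ := by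
    field_simp; ring
  have e₂ : δ / (q - p + δ) * p + (q - p) / (q - p + δ) * (q + δ) = q := by
    field_simp; ring
  rw [e₁] at h₁
  rw [e₂] at h₂
  linear_combination h₁ + h₂ + (f p + f (q + δ)) * hw

theorem ConvexOn.comp_sub_const {f : ℝ → ℝ} {a b : ℝ} (hf : ConvexOn ℝ (Icc a b) f) (c : ℝ) :
    ConvexOn ℝ (Icc (a + c) (b + c)) fun x => f (x - c) := by
  simpa [Function.comp_def, neg_add_eq_sub, preimage_const_add_Icc] using hf.translate_right (-c)

theorem ConcaveOn.comp_sub_const {f : ℝ → ℝ} {a b : ℝ} (hf : ConcaveOn ℝ (Icc a b) f) (c : ℝ) :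
    ConcaveOn ℝ (Icc (a + c) (b + c)) fun x => f (x - c) := by
  simpa [Function.comp_def, neg_add_eq_sub, preimage_const_add_Icc] using hf.translate_right (-c)

theorem ConvexOn.comp_neg {f : ℝ → ℝ} {a b : ℝ} (hf : ConvexOn ℝ (Icc a b) f) :
    ConvexOn ℝ (Icc (-b) (-a)) fun x => f (-x) :=
  neg_Icc a b ▸ hf.comp_linearMap (-LinearMap.id)

theorem concaveOn_of_forall_min_sub_mul_le {s : Set ℝ} {f : ℝ → ℝ} (hs : Convex ℝ s)
    (h : ∀ (k : ℝ) ⦃x y z : ℝ⦄, x ∈ s → z ∈ s → x < y → y < z →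
      min (f x - k * x) (f z - k * z) ≤ f y - k * y) :
    ConcaveOn ℝ s f := by
  refine concaveOn_of_slope_anti_adjacent hs fun {x y z} hx hz hxy hyz => ?_
  set k := (f z - f x) / (z - x)
  have hk : f x - k * x = f z - k * z := by
    simp only [k]; field_simp [(sub_pos.2 (hxy.trans hyz)).ne']; ring
  have hy := h k hx hz hxy hyz
  rw [← hk, min_self] at hy
  calc (f z - f y) / (z - y) ≤ k := (div_le_iff₀ (sub_pos.2 hyz)).2 (by linarith)
    _ ≤ (f y - f x) / (y - x) := (le_div_iff₀ (sub_pos.2 hxy)).2 (by linarith)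

theorem nonempty_Icc_max_sub_min_sub {a b c d x : ℝ} (hab : a ≤ b) (hcd : c ≤ d)
    (hx : x ∈ Icc (a + c) (b + d)) : (Icc (max a (x - d)) (min b (x - c))).Nonempty :=
  nonempty_Icc.2 (max_le (le_min hab (by linarith [hx.1])) (le_min (by linarith [hx.2])
    (by linarith)))

theorem mem_Icc_max_sub_min_sub_iff {a b c d x u : ℝ} :
    u ∈ Icc (max a (x - d)) (min b (x - c)) ↔ u ∈ Icc a b ∧ x - u ∈ Icc c d := by
  simp only [mem_Icc, max_le_iff, le_min_iff]
  constructor <;> intro h <;> refine ⟨⟨?_, ?_⟩, ?_, ?_⟩ <;> linarith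

/-- Restricting `u` and `v` to `[a,b]` and `[c,d]` encodes `F = +∞` off `[a,b]` and `G = +∞`
off `[c,d]`. -/
noncomputable def minPlusConv (F G : ℝ → ℝ) (a b c d x : ℝ) : ℝ :=
  sInf {z | ∃ u ∈ Icc a b, ∃ v ∈ Icc c d, u + v = x ∧ z = F u + G v}

section MinPlusConv

variable {F G : ℝ → ℝ} {a b c d : ℝ}

theorem minPlusConv_eq_sInf_image (x : ℝ) :
    minPlusConv F G a b c d x =
      sInf ((fun u => F u + G (x - u)) '' Icc (max a (x - d)) (min b (x - c))) := by
  refine congrArg sInf (Set.ext fun z => ⟨?_, ?_⟩)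
  · rintro ⟨u, hu, v, hv, rfl, rfl⟩
    exact ⟨u, mem_Icc_max_sub_min_sub_iff.2 ⟨hu, by rwa [add_sub_cancel_left]⟩,
      by simp only [add_sub_cancel_left]⟩
  · rintro ⟨u, hu, rfl⟩
    obtain ⟨hu, hv⟩ := mem_Icc_max_sub_min_sub_iff.1 hu
    exact ⟨u, hu, x - u, hv, add_sub_cancel _ _, rfl⟩

theorem minPlusConv_neg (x : ℝ) :
    minPlusConv (fun u => F (-u)) (fun v => G (-v)) (-b) (-a) (-d) (-c) x =
      minPlusConv F G a b c d (-x) := by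
  refine congrArg sInf (Set.ext fun z => ⟨?_, ?_⟩) <;> rintro ⟨u, hu, v, hv, huv, rfl⟩ <;>
    refine ⟨-u, ⟨?_, ?_⟩, -v, ⟨?_, ?_⟩, by linarith, by simp⟩ <;> linarith [hu.1, hu.2, hv.1, hv.2]

section Continuous

variable (hF : ContinuousOn F (Icc a b)) (hG : ContinuousOn G (Icc c d))
include hF hG

theorem continuousOn_add_comp_sub (x : ℝ) :
    ContinuousOn (fun u => F u + G (x - u)) (Icc (max a (x - d)) (min b (x - c))) :=
  (hF.mono fun _ hu => (mem_Icc_max_sub_min_sub_iff.1 hu).1).add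
    (hG.comp (continuousOn_const.sub continuousOn_id) fun _ hu =>
      (mem_Icc_max_sub_min_sub_iff.1 hu).2)

theorem minPlusConv_le {u v : ℝ} (hu : u ∈ Icc a b) (hv : v ∈ Icc c d) :
    minPlusConv F G a b c d (u + v) ≤ F u + G v := by
  rw [minPlusConv_eq_sInf_image]
  refine csInf_le (isCompact_Icc.bddBelow_image (continuousOn_add_comp_sub hF hG _))
    ⟨u, mem_Icc_max_sub_min_sub_iff.2 ⟨hu, by rwa [add_sub_cancel_left]⟩, ?_⟩
  simp only [add_sub_cancel_left]

variable (hab : a ≤ b) (hcd : c ≤ d)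
include hab hcd

theorem exists_minPlusConv_eq {x : ℝ} (hx : x ∈ Icc (a + c) (b + d)) :
    ∃ u ∈ Icc a b, x - u ∈ Icc c d ∧ minPlusConv F G a b c d x = F u + G (x - u) := by
  obtain ⟨u, hu, heq⟩ := (isCompact_Icc.image_of_continuousOn (continuousOn_add_comp_sub hF hG x)
    ).sInf_mem ((nonempty_Icc_max_sub_min_sub hab hcd hx).image _)
  obtain ⟨hu, hv⟩ := mem_Icc_max_sub_min_sub_iff.1 hu
  exact ⟨u, hu, hv, by rw [minPlusConv_eq_sInf_image, ← heq]⟩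

theorem continuousOn_minPlusConv :
    ContinuousOn (minPlusConv F G a b c d) (Icc (a + c) (b + d)) := by
  set F' : ℝ → ℝ := fun u => F (projIcc a b hab u)
  set G' : ℝ → ℝ := fun v => G (projIcc c d hcd v)
  have hF' : Continuous F' :=
    hF.comp_continuous (continuous_subtype_val.comp continuous_projIcc) fun _ => Subtype.prop _
  have hG' : Continuous G' :=
    hG.comp_continuous (continuous_subtype_val.comp continuous_projIcc) fun _ => Subtype.prop _
  -- Parametrize the admissible `u ∈ [max a (x - d), min b (x - c)]` by `s ∈ [0, 1]`, so that
  -- the infimum is over a fixed compact set.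
  set u : ℝ → ℝ → ℝ := fun x s => AffineMap.lineMap (max a (x - d)) (min b (x - c)) s
  have hu : Continuous ↿u := by
    simp only [u, AffineMap.lineMap_apply_ring']
    fun_prop
  refine (isCompact_Icc.continuous_sInf (K := Icc 0 1)
    (f := fun x s => F' (u x s) + G' (x - u x s)) (by fun_prop)).continuousOn.congr fun x hx => ?_
  have hrange : u x '' Icc 0 1 = Icc (max a (x - d)) (min b (x - c)) := by
    rw [← segment_eq_image_lineMap, segment_eq_Icc (nonempty_Icc.1
      (nonempty_Icc_max_sub_min_sub hab hcd hx))]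
  rw [minPlusConv_eq_sInf_image, ← hrange, ← image_comp]
  refine congrArg sInf (image_congr fun s hs => ?_)
  obtain ⟨hu, hv⟩ := mem_Icc_max_sub_min_sub_iff.1 (hrange ▸ mem_image_of_mem (u x) hs)
  simp only [Function.comp_apply, F', G', projIcc_of_mem hab hu, projIcc_of_mem hcd hv]

end Continuous

end MinPlusConv

section ConvexParts

variable {F G : ℝ → ℝ} {a b c d : ℝ} (hFconv : ConvexOn ℝ (Icc a b) F)
  (hF : ContinuousOn F (Icc a b)) (hG : ContinuousOn G (Icc c d)) (hab : a ≤ b) (hcd : c ≤ d)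
include hFconv hF hG hab hcd

/-- For `x = u + v` with `u ≤ x - c`, convexity of `F` says that `F` increases less from `u` than
from `x - c` over the length `x₀ - x`; compare with the optimality of `v = c` at `x₀`. -/
theorem minPlusConv_eq_left_of_le {x₀ x : ℝ} (h₀ : minPlusConv F G a b c d x₀ = F (x₀ - c) + G c)
    (hx₀ : x₀ ≤ b + c) (hx : a + c ≤ x) (hxx₀ : x ≤ x₀) :
    minPlusConv F G a b c d x = F (x - c) + G c := by
  refine le_antisymm ?_ ?_
  · simpa using minPlusConv_le hF hG (u := x - c) (v := c) ⟨by linarith, by linarith⟩ ⟨le_rfl, hcd⟩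
  obtain ⟨u, hu, hv, hxu⟩ := exists_minPlusConv_eq hF hG hab hcd ⟨hx, by linarith⟩
  have hx₀u : F (x₀ - c) + G c ≤ F (x₀ - (x - u)) + G (x - u) := by
    simpa [h₀] using minPlusConv_le hF hG (u := x₀ - (x - u)) (v := x - u)
      ⟨by linarith [hu.1], by linarith [hv.1]⟩ hv
  have hincr := hFconv.map_add_sub_map_le (δ := x₀ - x) hu ⟨by linarith, by linarith⟩
    (by linarith [hv.1] : u ≤ x - c) (by linarith)
  rw [show u + (x₀ - x) = x₀ - (x - u) by ring, show x - c + (x₀ - x) = x₀ - c by ring] at hincr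
  linarith

theorem exists_minPlusConv_eq_left :
    ∃ β ∈ Icc (a + c) (b + c),
      (∀ x ∈ Icc (a + c) β, minPlusConv F G a b c d x = F (x - c) + G c) ∧
      ∀ x ∈ Ioc β (b + c), minPlusConv F G a b c d x < F (x - c) + G c := by
  set X := {x ∈ Icc (a + c) (b + c) | minPlusConv F G a b c d x = F (x - c) + G c}
  have hX_closed : IsClosed X := by
    refine ContinuousOn.preimage_isClosed_of_isClosed
      (f := fun x => (minPlusConv F G a b c d x, F (x - c) + G c)) ?_ isClosed_Icc
      isClosed_diagonal
    refine ((continuousOn_minPlusConv hF hG hab hcd).mono fun x hx => ⟨hx.1, by linarith [hx.2]⟩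
      ).prodMk ((hF.comp (continuous_sub_right c).continuousOn fun x hx => ?_).add
        continuousOn_const)
    exact ⟨by linarith [hx.1], by linarith [hx.2]⟩
  have hac : a + c ∈ X := by
    refine ⟨⟨le_rfl, by linarith⟩, ?_⟩
    obtain ⟨u, hu, hv, h⟩ := exists_minPlusConv_eq hF hG hab hcd ⟨le_rfl, by linarith⟩
    obtain rfl : u = a := by linarith [hu.1, hv.1]
    simpa using h
  have hX_bdd : BddAbove X := ⟨b + c, fun x hx => hx.1.2⟩
  obtain ⟨hβ, hβ_eq⟩ : sSup X ∈ X := hX_closed.csSup_mem ⟨_, hac⟩ hX_bdd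
  refine ⟨sSup X, hβ, fun x hx => minPlusConv_eq_left_of_le hFconv hF hG hab hcd hβ_eq hβ.2
    hx.1 hx.2, fun x hx => (lt_of_le_of_ne ?_ fun h => ?_)⟩
  · simpa using minPlusConv_le hF hG (u := x - c) (v := c) ⟨by linarith [hβ.1, hx.1], by
      linarith [hx.2]⟩ ⟨le_rfl, hcd⟩
  · exact hx.1.not_ge (le_csSup hX_bdd ⟨⟨by linarith [hβ.1, hx.1], hx.2⟩, h⟩)

theorem exists_minPlusConv_eq_right :
    ∃ γ ∈ Icc (a + d) (b + d),
      (∀ x ∈ Icc γ (b + d), minPlusConv F G a b c d x = F (x - d) + G d) ∧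
      ∀ x ∈ Ico (a + d) γ, minPlusConv F G a b c d x < F (x - d) + G d := by
  obtain ⟨β, hβ, heq, hlt⟩ := exists_minPlusConv_eq_left (G := fun v => G (-v)) hFconv.comp_neg
    (hF.comp continuousOn_neg fun u hu => ⟨by linarith [hu.2], by linarith [hu.1]⟩)
    (hG.comp continuousOn_neg fun v hv => ⟨by linarith [hv.2], by linarith [hv.1]⟩)
    (neg_le_neg hab) (neg_le_neg hcd)
  refine ⟨-β, ⟨by linarith [hβ.2], by linarith [hβ.1]⟩, fun x hx => ?_, fun x hx => ?_⟩
  · have h := heq (-x) ⟨by linarith [hx.2], by linarith [hx.1]⟩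
    rwa [minPlusConv_neg, neg_neg, neg_neg, show -(-x - -d) = x - d by ring] at h
  · have h := hlt (-x) ⟨by linarith [hx.2], by linarith [hx.1]⟩
    rwa [minPlusConv_neg, neg_neg, neg_neg, show -(-x - -d) = x - d by ring] at h

end ConvexParts

theorem sub_mul_lt_of_isMinOn_of_lt_min {F G : ℝ → ℝ} {a b c d : ℝ}
    (hF : ContinuousOn F (Icc a b)) (hG : ContinuousOn G (Icc c d)) {k x₁ x₂ t u e : ℝ}
    (hmin : IsMinOn (fun x => minPlusConv F G a b c d x - k * x) (Icc x₁ x₂) t)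
    (ht_lt : minPlusConv F G a b c d t - k * t <
      min (minPlusConv F G a b c d x₁ - k * x₁) (minPlusConv F G a b c d x₂ - k * x₂))
    (hu : u ∈ Icc a b) (he : e ∈ Icc x₁ x₂) (hev : e - u ∈ Icc c d)
    (hcases : e = x₁ ∨ e = x₂ ∨ minPlusConv F G a b c d e < F u + G (e - u)) :
    minPlusConv F G a b c d t - k * t < G (e - u) + F u - k * e := by
  have hle : minPlusConv F G a b c d e ≤ F u + G (e - u) := by
    simpa using minPlusConv_le hF hG hu hev
  have hmin_e : minPlusConv F G a b c d t - k * t ≤ minPlusConv F G a b c d e - k * e := hmin he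
  have : minPlusConv F G a b c d t - k * t < minPlusConv F G a b c d e - k * e ∨
      minPlusConv F G a b c d e < F u + G (e - u) := by
    rcases hcases with rfl | rfl | hlt
    · exact Or.inl (ht_lt.trans_le (min_le_left _ _))
    · exact Or.inl (ht_lt.trans_le (min_le_right _ _))
    · exact Or.inr hlt
  rcases this with h | h <;> linarith

section ConcavePart

variable {F G : ℝ → ℝ} {a b c d : ℝ} (hGconc : ConcaveOn ℝ (Icc c d) G)
  (hF : ContinuousOn F (Icc a b)) (hG : ContinuousOn G (Icc c d)) (hab : a ≤ b) (hcd : c ≤ d)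
  {β γ : ℝ} (hβ : a + c ≤ β) (hγ : γ ≤ b + d)
  (hβ_lt : ∀ x ∈ Ioc β (b + c), minPlusConv F G a b c d x < F (x - c) + G c)
  (hγ_lt : ∀ x ∈ Ico (a + d) γ, minPlusConv F G a b c d x < F (x - d) + G d)
include hGconc hF hG hab hcd hβ hγ hβ_lt hγ_lt

theorem min_le_of_isMinOn_minPlusConv_sub_mul (k : ℝ) {x₁ x₂ t : ℝ} (hx₁ : β ≤ x₁)
    (hx₂ : x₂ ≤ γ) (ht : t ∈ Icc x₁ x₂)
    (hmin : IsMinOn (fun x => minPlusConv F G a b c d x - k * x) (Icc x₁ x₂) t) :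
    min (minPlusConv F G a b c d x₁ - k * x₁) (minPlusConv F G a b c d x₂ - k * x₂) ≤
      minPlusConv F G a b c d t - k * t := by
  set H := minPlusConv F G a b c d
  by_contra! ht_lt
  obtain ⟨u, hu, hv, htu⟩ :=
    exists_minPlusConv_eq hF hG hab hcd (x := t) ⟨by linarith [ht.1], by linarith [ht.2]⟩
  set ψ : ℝ → ℝ := fun r => G (r - u) + F u - k * r
  have hψ : ConcaveOn ℝ (Icc (c + u) (d + u)) ψ :=
    ((hGconc.comp_sub_const u).add_const (F u)).sub
      ((LinearMap.mulLeft ℝ k).convexOn (convex_Icc _ _))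
  have hψt : ψ t = H t - k * t := by
    simp only [ψ]
    rw [show H t = F u + G (t - u) from htu]
    ring
  have hut : u + c ≤ t ∧ t ≤ u + d := ⟨by linarith [hv.1], by linarith [hv.2]⟩
  have h_left : H t - k * t < ψ (max x₁ (u + c)) := by
    refine sub_mul_lt_of_isMinOn_of_lt_min hF hG hmin ht_lt hu
      ⟨le_max_left _ _, max_le (ht.1.trans ht.2) (hut.1.trans ht.2)⟩
      ⟨by linarith [le_max_right x₁ (u + c)], by linarith [max_le ht.1 hut.1]⟩ ?_
    rcases le_or_gt (u + c) x₁ with h | h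
    · exact Or.inl (max_eq_left h)
    · rw [max_eq_right h.le]
      exact Or.inr (Or.inr (by simpa using hβ_lt (u + c) ⟨hx₁.trans_lt h, by linarith [hu.2]⟩))
  have h_right : H t - k * t < ψ (min x₂ (u + d)) := by
    refine sub_mul_lt_of_isMinOn_of_lt_min hF hG hmin ht_lt hu
      ⟨le_min (ht.1.trans ht.2) (ht.1.trans hut.2), min_le_left _ _⟩
      ⟨by linarith [le_min ht.2 hut.2], by linarith [min_le_right x₂ (u + d)]⟩ ?_
    rcases le_or_gt x₂ (u + d) with h | h
    · exact Or.inr (Or.inl (min_eq_left h))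
    · rw [min_eq_right h.le]
      exact Or.inr (Or.inr (by simpa using hγ_lt (u + d) ⟨by linarith [hu.1], h.trans_le hx₂⟩))
  have hψ_min := hψ.min_le_of_mem_Icc
    ⟨by linarith [le_max_right x₁ (u + c)], by linarith [max_le ht.1 hut.1]⟩
    ⟨by linarith [le_min ht.2 hut.2], by linarith [min_le_right x₂ (u + d)]⟩
    ⟨max_le ht.1 hut.1, le_min ht.2 hut.2⟩
  exact (lt_min h_left h_right).not_ge (hψ_min.trans hψt.le)

theorem min_sub_mul_le_minPlusConv (k : ℝ) {x₁ y x₂ : ℝ} (hx₁ : β ≤ x₁) (hx₂ : x₂ ≤ γ)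
    (hy : y ∈ Icc x₁ x₂) :
    min (minPlusConv F G a b c d x₁ - k * x₁) (minPlusConv F G a b c d x₂ - k * x₂) ≤
      minPlusConv F G a b c d y - k * y := by
  have hcont : ContinuousOn (fun x => minPlusConv F G a b c d x - k * x) (Icc x₁ x₂) :=
    ((continuousOn_minPlusConv hF hG hab hcd).mono (Icc_subset_Icc (by linarith) (by linarith))).sub
      (continuousOn_const.mul continuousOn_id)
  obtain ⟨t, ht, hmin⟩ := isCompact_Icc.exists_isMinOn ⟨y, hy⟩ hcont
  exact (min_le_of_isMinOn_minPlusConv_sub_mul hGconc hF hG hab hcd hβ hγ hβ_lt hγ_lt k hx₁ hx₂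
    ht hmin).trans (hmin hy)

end ConcavePart

/-- The (min,plus)-convolution of a convex piecewise-affine function by a concave
piecewise-affine function decomposes into three (possibly trivial) consecutive
parts: convex on `[a+c, β]`, concave on `[β, γ]`, convex on `[γ, b+d]`. -/
theorem minplus_convolution_convex_concave (a b c d : ℝ) (hab : a < b) (hcd : c < d)
    (F G : ℝ → ℝ)
    (hFconv : ConvexOn ℝ (Set.Icc a b) F) (hFpwa : IsPiecewiseAffineOn F a b)
    (hGconc : ConcaveOn ℝ (Set.Icc c d) G) (hGpwa : IsPiecewiseAffineOn G c d) :
    let H : ℝ → ℝ := fun x =>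
      sInf {z | ∃ u ∈ Set.Icc a b, ∃ v ∈ Set.Icc c d, u + v = x ∧ z = F u + G v}
    ∃ β γ : ℝ, a + c ≤ β ∧ β ≤ γ ∧ γ ≤ b + d ∧
      ConvexOn ℝ (Set.Icc (a + c) β) H ∧
      ConcaveOn ℝ (Set.Icc β γ) H ∧
      ConvexOn ℝ (Set.Icc γ (b + d)) H := by
  intro H
  have hF := hFpwa.continuousOn hab
  have hG := hGpwa.continuousOn hcd
  obtain ⟨β, hβ, hβ_eq, hβ_lt⟩ := exists_minPlusConv_eq_left hFconv hF hG hab.le hcd.le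
  obtain ⟨γ, hγ, hγ_eq, hγ_lt⟩ := exists_minPlusConv_eq_right hFconv hF hG hab.le hcd.le
  refine ⟨β, max β γ, hβ.1, le_max_left _ _, max_le (by linarith [hβ.2]) hγ.2, ?_, ?_, ?_⟩
  · exact (((hFconv.comp_sub_const c).subset (Icc_subset_Icc le_rfl (by linarith [hβ.2]))
      (convex_Icc _ _)).add_const (G c)).congr fun x hx => (hβ_eq x hx).symm
  · exact concaveOn_of_forall_min_sub_mul_le (convex_Icc _ _) fun k x y z hx hz hxy hyz =>
      min_sub_mul_le_minPlusConv hGconc hF hG hab.le hcd.le hβ.1 hγ.2 hβ_lt hγ_lt k hx.1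
        ((le_max_iff.1 hz.2).resolve_left (by linarith [hx.1])) ⟨hxy.le, hyz.le⟩
  · have hsub : Icc (max β γ) (b + d) ⊆ Icc γ (b + d) := Icc_subset_Icc_left (le_max_right β γ)
    exact (((hFconv.comp_sub_const d).subset (hsub.trans (Icc_subset_Icc_left hγ.1))
      (convex_Icc _ _)).add_const (G d)).congr fun x hx => (hγ_eq x (hsub hx)).symm
end

section
/- Let f be convex piecewise affine, and let g_{j-1}, g_j be two consecutive affine pieces of a concave function, with slopes g'_{j-1} > g'_j, where g_{j-1} is defined on [c_{j-1}, c_j] and g_j on [c_j, c_{j+1}]. Let α_j = min{ a_i in the decomposition of f : f'_i ≥ g'_j } and α_{j-1} = min{ a_i : f'_i ≥ g'_{j-1} }. Then for all x ≤ c_j + α_j, (f * g_j)(x) ≥ (f * g_{j-1})(x), and for all x ≥ c_j + α_{j-1}, (f * g_{j-1})(x) ≥ (f * g_j)(x). -/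
/-!
On `[a₀, α₂]` every piece of `f` has slope below `s₂`, so moving the argument of `f` to the right
by `δ` there costs at most `s₂ δ`, which is exactly what `g_j` gains when its argument moves left
by `δ`. Hence any pair `(y, x - y)` with `x - y ∈ [c_j, c_{j+1}]` is dominated by the pair
`(x - c_j, c_j)`, and `c_j` is also in the domain of `g_{j-1}`, where `g_{j-1}(c_j) = g_j(c_j)`.
Symmetrically, on `[α₁, a_n]` every slope is at least `s₁`.
-/

open Set

theorem monotoneOn_Icc_of_monotoneOn_pieces {α β : Type*} [LinearOrder α] [Preorder β] {n : ℕ}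
    {a : Fin (n + 1) → α} (ha : Monotone a) {H : α → β} {j k : Fin (n + 1)} (hjk : j ≤ k)
    (hH : ∀ i : Fin n, j ≤ i.castSucc → i.succ ≤ k →
      MonotoneOn H (Icc (a i.castSucc) (a i.succ))) :
    MonotoneOn H (Icc (a j) (a k)) := by
  induction k using Fin.induction with
  | zero => exact (subsingleton_Icc_of_ge (ha (Fin.zero_le j))).monotoneOn H
  | succ i ih =>
    rcases hjk.eq_or_lt with rfl | hlt
    · exact (subsingleton_Icc_of_ge le_rfl).monotoneOn H
    have hj : j ≤ i.castSucc := Fin.le_castSucc_iff.mpr hlt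
    have hji : a j ≤ a i.castSucc := ha hj
    have hii : a i.castSucc ≤ a i.succ := ha (Fin.castSucc_le_succ i)
    have below := ih hj fun i' hj' hi' => hH i' hj' (hi'.trans (Fin.castSucc_le_succ i))
    rw [← Icc_union_Icc_eq_Icc hji hii]
    exact below.union_right (hH i hj le_rfl) (isGreatest_Icc hji) (isLeast_Icc hii)

theorem breakpoints_finite {n : ℕ} (a : Fin (n + 1) → ℝ) (p : Fin n → Prop) :
    {x | ∃ i : Fin n, x = a i.castSucc ∧ p i}.Finite :=
  (finite_range fun i : Fin n => a i.castSucc).subset <| by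
    rintro _ ⟨i, rfl, -⟩
    exact mem_range_self i

theorem csInf_breakpoints_le {n : ℕ} (a : Fin (n + 1) → ℝ) {p : Fin n → Prop} {i : Fin n}
    (hi : p i) :
    sInf {x | ∃ i : Fin n, x = a i.castSucc ∧ p i} ≤ a i.castSucc :=
  csInf_le (breakpoints_finite a p).bddBelow ⟨i, rfl, hi⟩

theorem exists_csInf_breakpoints_eq {n : ℕ} (a : Fin (n + 1) → ℝ) {p : Fin n → Prop}
    (h : ∃ i, p i) :
    ∃ i, p i ∧ sInf {x | ∃ i : Fin n, x = a i.castSucc ∧ p i} = a i.castSucc := by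
  obtain ⟨i, hi⟩ := h
  have hne : {x | ∃ i : Fin n, x = a i.castSucc ∧ p i}.Nonempty := ⟨_, i, rfl, hi⟩
  obtain ⟨i, hx, hp⟩ := hne.csInf_mem (breakpoints_finite a p)
  exact ⟨i, hp, hx⟩

theorem le_iInf_ite_add_ite {S T : Set ℝ} [DecidablePred (· ∈ S)] [DecidablePred (· ∈ T)]
    {F G : ℝ → ℝ} {u : EReal} {x : ℝ}
    (h : ∀ y ∈ S, x - y ∈ T → u ≤ ((F y + G (x - y) : ℝ) : EReal)) :
    u ≤ ⨅ y, (if y ∈ S then (F y : EReal) else ⊤) +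
      (if x - y ∈ T then (G (x - y) : EReal) else ⊤) := by
  refine le_iInf fun y => ?_
  split_ifs with hy hxy
  · exact_mod_cast h y hy hxy
  all_goals simp

section PiecewiseAffine

variable {n : ℕ} {a : Fin (n + 1) → ℝ} {r : Fin n → ℝ} {F : ℝ → ℝ}

theorem monotoneOn_mul_sub_of_slope_le (ha : Monotone a)
    (hF : ∀ i : Fin n, ∀ x ∈ Icc (a i.castSucc) (a i.succ),
      F x = F (a i.castSucc) + r i * (x - a i.castSucc))
    {j k : Fin (n + 1)} (hjk : j ≤ k) {s : ℝ}
    (hs : ∀ i : Fin n, j ≤ i.castSucc → i.succ ≤ k → r i ≤ s) :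
    MonotoneOn (fun t => s * t - F t) (Icc (a j) (a k)) := by
  refine monotoneOn_Icc_of_monotoneOn_pieces ha hjk fun i hj hk u hu v hv huv => ?_
  simp only [hF i u hu, hF i v hv]
  nlinarith [hs i hj hk]

theorem monotoneOn_sub_mul_of_le_slope (ha : Monotone a)
    (hF : ∀ i : Fin n, ∀ x ∈ Icc (a i.castSucc) (a i.succ),
      F x = F (a i.castSucc) + r i * (x - a i.castSucc))
    {j k : Fin (n + 1)} (hjk : j ≤ k) {s : ℝ}
    (hs : ∀ i : Fin n, j ≤ i.castSucc → i.succ ≤ k → s ≤ r i) :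
    MonotoneOn (fun t => F t - s * t) (Icc (a j) (a k)) := by
  refine monotoneOn_Icc_of_monotoneOn_pieces ha hjk fun i hj hk u hu v hv huv => ?_
  simp only [hF i u hu, hF i v hv]
  nlinarith [hs i hj hk]

theorem iInf_add_le_iInf_add_ite_Icc_of_slope_le (ha : Monotone a)
    (hF : ∀ i : Fin n, ∀ x ∈ Icc (a i.castSucc) (a i.succ),
      F x = F (a i.castSucc) + r i * (x - a i.castSucc))
    {k : Fin (n + 1)} {s c c' x : ℝ} {g : ℝ → EReal} {G : ℝ → ℝ}
    (hslope : ∀ i : Fin n, i.succ ≤ k → r i ≤ s) (hG : ∀ z, G z = G c + s * (z - c))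
    (hgc : g c ≤ G c) (hx : x ≤ c + a k) :
    ⨅ y, (if y ∈ Icc (a 0) (a (Fin.last n)) then (F y : EReal) else ⊤) + g (x - y) ≤
      ⨅ y, (if y ∈ Icc (a 0) (a (Fin.last n)) then (F y : EReal) else ⊤) +
        (if x - y ∈ Icc c c' then (G (x - y) : EReal) else ⊤) := by
  refine le_iInf_ite_add_ite fun y hy hxy => ?_
  have hyy' : y ≤ x - c := by linarith [hxy.1]
  have hy'k : x - c ≤ a k := by linarith
  have hy' : x - c ∈ Icc (a 0) (a (Fin.last n)) :=
    ⟨hy.1.trans hyy', hy'k.trans (ha (Fin.le_last k))⟩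
  have hFy' : s * y - F y ≤ s * (x - c) - F (x - c) :=
    monotoneOn_mul_sub_of_slope_le ha hF (Fin.zero_le k) (fun i _ hi => hslope i hi)
      ⟨hy.1, hyy'.trans hy'k⟩ ⟨hy'.1, hy'k⟩ hyy'
  refine (iInf_le _ (x - c)).trans ?_
  simp only [hy', if_true, sub_sub_cancel]
  calc (F (x - c) : EReal) + g c ≤ ((F (x - c) + G c : ℝ) : EReal) := by
        rw [EReal.coe_add]; gcongr
    _ ≤ _ := by rw [hG (x - y)]; exact_mod_cast (by linarith)

theorem iInf_add_le_iInf_add_ite_Icc_of_le_slope (ha : Monotone a)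
    (hF : ∀ i : Fin n, ∀ x ∈ Icc (a i.castSucc) (a i.succ),
      F x = F (a i.castSucc) + r i * (x - a i.castSucc))
    {k : Fin (n + 1)} {s c c' x : ℝ} {g : ℝ → EReal} {G : ℝ → ℝ}
    (hslope : ∀ i : Fin n, k ≤ i.castSucc → s ≤ r i) (hG : ∀ z, G z = G c + s * (z - c))
    (hgc : g c ≤ G c) (hx : c + a k ≤ x) :
    ⨅ y, (if y ∈ Icc (a 0) (a (Fin.last n)) then (F y : EReal) else ⊤) + g (x - y) ≤
      ⨅ y, (if y ∈ Icc (a 0) (a (Fin.last n)) then (F y : EReal) else ⊤) +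
        (if x - y ∈ Icc c' c then (G (x - y) : EReal) else ⊤) := by
  refine le_iInf_ite_add_ite fun y hy hxy => ?_
  have hy'y : x - c ≤ y := by linarith [hxy.2]
  have hky' : a k ≤ x - c := by linarith
  have hy' : x - c ∈ Icc (a 0) (a (Fin.last n)) :=
    ⟨(ha (Fin.zero_le k)).trans hky', hy'y.trans hy.2⟩
  have hFy' : F (x - c) - s * (x - c) ≤ F y - s * y :=
    monotoneOn_sub_mul_of_le_slope ha hF (Fin.le_last k) (fun i hi _ => hslope i hi)
      ⟨hky', hy'.2⟩ ⟨hky'.trans hy'y, hy.2⟩ hy'y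
  refine (iInf_le _ (x - c)).trans ?_
  simp only [hy', if_true, sub_sub_cancel]
  calc (F (x - c) : EReal) + g c ≤ ((F (x - c) + G c : ℝ) : EReal) := by
        rw [EReal.coe_add]; gcongr
    _ ≤ _ := by rw [hG (x - y)]; exact_mod_cast (by linarith)

end PiecewiseAffine

theorem minplus_convolution_consecutive_pieces_general (n : ℕ)
    (a : Fin (n + 1) → ℝ) (ha : StrictMono a)
    (r : Fin n → ℝ) (hr : Monotone r) (F : ℝ → ℝ)
    (hF : ∀ i : Fin n, ∀ x ∈ Set.Icc (a i.castSucc) (a i.succ),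
      F x = F (a i.castSucc) + r i * (x - a i.castSucc))
    (c1 c2 c3 s1 s2 : ℝ) (hc12 : c1 < c2) (hc23 : c2 < c3)
    (G1 G2 : ℝ → ℝ)
    (hG1 : ∀ x, G1 x = G1 c1 + s1 * (x - c1))
    (hG2 : ∀ x, G2 x = G2 c2 + s2 * (x - c2))
    (hglue : G1 c2 = G2 c2)
    (hS1 : ∃ i : Fin n, s1 ≤ r i) (hS2 : ∃ i : Fin n, s2 ≤ r i) :
    let f : ℝ → EReal := fun x =>
      if x ∈ Set.Icc (a 0) (a (Fin.last n)) then (F x : EReal) else ⊤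
    let g1 : ℝ → EReal := fun x => if x ∈ Set.Icc c1 c2 then (G1 x : EReal) else ⊤
    let g2 : ℝ → EReal := fun x => if x ∈ Set.Icc c2 c3 then (G2 x : EReal) else ⊤
    let conv : (ℝ → EReal) → ℝ → EReal := fun g x => ⨅ y : ℝ, f y + g (x - y)
    let α1 : ℝ := sInf {x | ∃ i : Fin n, x = a i.castSucc ∧ s1 ≤ r i}
    let α2 : ℝ := sInf {x | ∃ i : Fin n, x = a i.castSucc ∧ s2 ≤ r i}
    (∀ x : ℝ, x ≤ c2 + α2 → conv g1 x ≤ conv g2 x) ∧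
      (∀ x : ℝ, c2 + α1 ≤ x → conv g2 x ≤ conv g1 x) := by
  intro f g1 g2 conv α1 α2
  obtain ⟨i₁, hi₁, hα1⟩ := exists_csInf_breakpoints_eq a hS1
  obtain ⟨i₂, -, hα2⟩ := exists_csInf_breakpoints_eq a hS2
  have hA1 : α1 = a i₁.castSucc := hα1
  have hA2 : α2 = a i₂.castSucc := hα2
  refine ⟨fun x hx => ?_, fun x hx => ?_⟩
  · have hslope : ∀ i : Fin n, i.succ ≤ i₂.castSucc → r i ≤ s2 := fun i hi => by
      by_contra! h
      have hle : a i₂.castSucc ≤ a i.castSucc := hα2 ▸ csInf_breakpoints_le a h.le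
      exact (ha.monotone hi).not_gt (hle.trans_lt (ha (Fin.castSucc_lt_succ (i := i))))
    exact iInf_add_le_iInf_add_ite_Icc_of_slope_le ha.monotone hF hslope hG2
      (by simp [g1, hc12.le, hglue]) (hA2 ▸ hx)
  · have hG1' : ∀ x, G1 x = G1 c2 + s1 * (x - c2) := fun x => by rw [hG1 x, hG1 c2]; ring
    exact iInf_add_le_iInf_add_ite_Icc_of_le_slope ha.monotone hF
      (fun i hi => hi₁.trans (hr (Fin.castSucc_le_castSucc_iff.mp hi))) hG1'
      (by simp [g2, hc23.le, hglue]) (hA1 ▸ hx)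

/-- Comparison of the convolutions of a convex piecewise-affine function `f` with two
consecutive affine pieces `g_{j-1}` (slope `s₁` on `[c₁,c₂]`) and `g_j` (slope
`s₂ < s₁` on `[c₂,c₃]`) of a concave function: with
`α₁ = min { a_i : f'_i ≥ s₁ }` and `α₂ = min { a_i : f'_i ≥ s₂ }`, one has
`f * g_j ≥ f * g_{j-1}` for `x ≤ c₂ + α₂` and `f * g_{j-1} ≥ f * g_j` for
`x ≥ c₂ + α₁`. -/
theorem minplus_convolution_consecutive_pieces (n : ℕ) (hn : 0 < n)
    (a : Fin (n + 1) → ℝ) (ha : StrictMono a)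
    (r : Fin n → ℝ) (hr : Monotone r) (F : ℝ → ℝ)
    (hF : ∀ i : Fin n, ∀ x ∈ Set.Icc (a i.castSucc) (a i.succ),
      F x = F (a i.castSucc) + r i * (x - a i.castSucc))
    (c1 c2 c3 s1 s2 : ℝ) (hc12 : c1 < c2) (hc23 : c2 < c3) (hs : s2 < s1)
    (G1 G2 : ℝ → ℝ)
    (hG1 : ∀ x, G1 x = G1 c1 + s1 * (x - c1))
    (hG2 : ∀ x, G2 x = G2 c2 + s2 * (x - c2))
    (hglue : G1 c2 = G2 c2)
    (hS1 : ∃ i : Fin n, s1 ≤ r i) (hS2 : ∃ i : Fin n, s2 ≤ r i) :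
    let f : ℝ → EReal := fun x =>
      if x ∈ Set.Icc (a 0) (a (Fin.last n)) then (F x : EReal) else ⊤
    let g1 : ℝ → EReal := fun x => if x ∈ Set.Icc c1 c2 then (G1 x : EReal) else ⊤
    let g2 : ℝ → EReal := fun x => if x ∈ Set.Icc c2 c3 then (G2 x : EReal) else ⊤
    let conv : (ℝ → EReal) → ℝ → EReal := fun g x => ⨅ y : ℝ, f y + g (x - y)
    let α1 : ℝ := sInf {x | ∃ i : Fin n, x = a i.castSucc ∧ s1 ≤ r i}
    let α2 : ℝ := sInf {x | ∃ i : Fin n, x = a i.castSucc ∧ s2 ≤ r i}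
    (∀ x : ℝ, x ≤ c2 + α2 → conv g1 x ≤ conv g2 x) ∧
      (∀ x : ℝ, c2 + α1 ≤ x → conv g2 x ≤ conv g1 x) :=
  minplus_convolution_consecutive_pieces_general n a ha r hr F hF c1 c2 c3 s1 s2 hc12 hc23 G1 G2 hG1
    hG2 hglue hS1 hS2
end

section
/- A priori bound on minimizers' velocity: let L(t,x,v) = K*(v) − V(t,x) with K* ∈ C²(ℝⁿ) uniformly strictly convex (D²K*(v)(Y,Y) ≥ c|Y|² for some c > 0) and V ∈ C² with |∂_t^j ∂_x^q V| ≤ B for j + q ≤ 2. Then for all T > 0 and R > 0 there exists M(R,T) such that for all x, y ∈ ℝⁿ with |x − y| ≤ R and all t ∈ ℝ, every C² solution γ : [t, t+T] → ℝⁿ of the Euler–Lagrange equation that minimizes the action ∫_t^{t+T} L(s,γ(s),γ'(s)) ds among absolutely continuous curves with γ(t) = x, γ(t+T) = y satisfies |γ'(s)| ≤ M(R,T) for all s ∈ [t, t+T]. -/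
/-!
By the Euler–Lagrange equation the momentum `∇K*(γ')` has derivative `-∂ₓV`, bounded by `B`, so
it varies by at most `B T` on `[t, t + T]`. Uniform convexity makes `∇K*` expand distances by at
least `c`, so the velocity varies by at most `B T / c`. Since its mean value is `(y - x) / T`,
`‖γ'‖ ≤ R / T + B T / c`.
-/

open MeasureTheory Set

section StrongConvexity

variable {E : Type*} [NormedAddCommGroup E] [NormedSpace ℝ E] {K : E → ℝ} {c : ℝ}

theorem mul_norm_sub_sq_le_fderiv_sub_apply (hK : ContDiff ℝ 2 K)
    (hKconv : ∀ v Y : E, c * ‖Y‖ ^ 2 ≤ iteratedFDeriv ℝ 2 K v ![Y, Y]) (v w : E) :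
    c * ‖v - w‖ ^ 2 ≤ (fderiv ℝ K v - fderiv ℝ K w) (v - w) := by
  set u := v - w
  have hK' : Differentiable ℝ (fderiv ℝ K) :=
    (hK.fderiv_right (m := 1) le_rfl).differentiable one_ne_zero
  have hderiv : ∀ τ : ℝ, HasDerivAt (fun τ => fderiv ℝ K (w + τ • u) u)
      (fderiv ℝ (fderiv ℝ K) (w + τ • u) u u) τ := fun τ => by
    have hline : HasDerivAt (fun τ : ℝ => w + τ • u) u τ := by
      simpa using ((hasDerivAt_id τ).smul_const u).const_add w
    simpa using ((hK' _).hasFDerivAt.comp_hasDerivAt τ hline).clm_apply (hasDerivAt_const τ u)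
  have hgrowth := mul_sub_le_image_sub_of_le_deriv (fun τ => (hderiv τ).differentiableAt)
    (fun τ => by simpa [(hderiv τ).deriv, iteratedFDeriv_two_apply] using hKconv (w + τ • u) u)
    zero_le_one
  simpa [u] using hgrowth

theorem mul_norm_sub_le_norm_fderiv_sub (hK : ContDiff ℝ 2 K)
    (hKconv : ∀ v Y : E, c * ‖Y‖ ^ 2 ≤ iteratedFDeriv ℝ 2 K v ![Y, Y]) (v w : E) :
    c * ‖v - w‖ ≤ ‖fderiv ℝ K v - fderiv ℝ K w‖ := by
  rcases eq_or_ne v w with rfl | hvw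
  · simp
  refine le_of_mul_le_mul_right ?_ (norm_pos_iff.2 (sub_ne_zero.2 hvw))
  calc c * ‖v - w‖ * ‖v - w‖ = c * ‖v - w‖ ^ 2 := by ring
    _ ≤ (fderiv ℝ K v - fderiv ℝ K w) (v - w) := mul_norm_sub_sq_le_fderiv_sub_apply hK hKconv v w
    _ ≤ ‖fderiv ℝ K v - fderiv ℝ K w‖ * ‖v - w‖ :=
      (le_abs_self _).trans ((fderiv ℝ K v - fderiv ℝ K w).le_opNorm _)

end StrongConvexity

theorem norm_fderiv_slice_le {𝕜 E F G : Type*} [NontriviallyNormedField 𝕜]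
    [NormedAddCommGroup E] [NormedSpace 𝕜 E] [NormedAddCommGroup F] [NormedSpace 𝕜 F]
    [NormedAddCommGroup G] [NormedSpace 𝕜 G] {W : E × F → G} {a : E} {z : F}
    (hW : DifferentiableAt 𝕜 W (a, z)) :
    ‖fderiv 𝕜 (fun z => W (a, z)) z‖ ≤ ‖fderiv 𝕜 W (a, z)‖ := by
  have hslice : HasFDerivAt (fun z => W (a, z))
      ((fderiv 𝕜 W (a, z)).comp (ContinuousLinearMap.inr 𝕜 E F)) z :=
    hW.hasFDerivAt.comp z ((hasFDerivAt_const a z).prodMk (hasFDerivAt_id z))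
  rw [hslice.fderiv]
  exact ((fderiv 𝕜 W (a, z)).opNorm_comp_le _).trans
    (mul_le_of_le_one_right (norm_nonneg _) (ContinuousLinearMap.norm_inr_le_one 𝕜 E F))

section MeanValue

variable {E : Type*} [NormedAddCommGroup E] [NormedSpace ℝ E] {a b C : ℝ}

theorem norm_image_sub_le_of_norm_deriv_le_Icc {f f' : ℝ → E}
    (hf : ∀ σ ∈ Icc a b, HasDerivAt f (f' σ) σ) (bound : ∀ σ ∈ Icc a b, ‖f' σ‖ ≤ C)
    {s₁ s₂ : ℝ} (hs₁ : s₁ ∈ Icc a b) (hs₂ : s₂ ∈ Icc a b) :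
    ‖f s₂ - f s₁‖ ≤ C * (b - a) := by
  have hC : 0 ≤ C := (norm_nonneg _).trans (bound s₁ hs₁)
  calc ‖f s₂ - f s₁‖ ≤ C * ‖s₂ - s₁‖ :=
        (convex_Icc a b).norm_image_sub_le_of_norm_hasDerivWithin_le
          (fun σ hσ => (hf σ hσ).hasDerivWithinAt) bound hs₁ hs₂
    _ ≤ C * (b - a) := by
        gcongr
        rw [Real.norm_eq_abs, abs_sub_le_iff]
        constructor <;> linarith [hs₁.1, hs₁.2, hs₂.1, hs₂.2]

theorem mul_norm_deriv_le_of_norm_deriv_sub_le {γ : ℝ → E}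
    (hγ : ∀ σ ∈ Icc a b, DifferentiableAt ℝ γ σ) {s : ℝ} (hs : s ∈ Icc a b)
    (hosc : ∀ σ ∈ Icc a b, ‖deriv γ σ - deriv γ s‖ ≤ C) :
    (b - a) * ‖deriv γ s‖ ≤ ‖γ b - γ a‖ + C * (b - a) := by
  have hab : a ≤ b := hs.1.trans hs.2
  -- mean value inequality for `γ` minus its tangent line at `s`
  have hdev : ‖(γ b - b • deriv γ s) - (γ a - a • deriv γ s)‖ ≤ C * (b - a) :=
    norm_image_sub_le_of_norm_deriv_le_Icc (f := fun σ => γ σ - σ • deriv γ s)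
      (fun σ hσ => by
        simpa using (hγ σ hσ).hasDerivAt.fun_sub ((hasDerivAt_id' σ).smul_const (deriv γ s)))
      hosc (left_mem_Icc.2 hab) (right_mem_Icc.2 hab)
  have hrw : (γ b - b • deriv γ s) - (γ a - a • deriv γ s) =
      (γ b - γ a) - (b - a) • deriv γ s := by
    rw [sub_smul]; abel
  rw [hrw] at hdev
  calc (b - a) * ‖deriv γ s‖ = ‖(b - a) • deriv γ s‖ := by
        rw [norm_smul, Real.norm_of_nonneg (sub_nonneg.2 hab)]
    _ ≤ ‖γ b - γ a‖ + ‖(γ b - γ a) - (b - a) • deriv γ s‖ := norm_le_insert _ _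
    _ ≤ ‖γ b - γ a‖ + C * (b - a) := by gcongr

end MeanValue

theorem velocity_bound_of_minimizer_general (n : ℕ)
    (Kstar : (Fin n → ℝ) → ℝ) (V : ℝ → (Fin n → ℝ) → ℝ)
    (hK : ContDiff ℝ 2 Kstar) (c : ℝ) (hc : 0 < c)
    (hKconv : ∀ v Y : Fin n → ℝ, c * ‖Y‖ ^ 2 ≤ iteratedFDeriv ℝ 2 Kstar v ![Y, Y])
    (B : ℝ) (hV : ContDiff ℝ 2 fun p : ℝ × (Fin n → ℝ) => V p.1 p.2)
    (hVb : ∀ j ≤ 2, ∀ p : ℝ × (Fin n → ℝ),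
      ‖iteratedFDeriv ℝ j (fun q : ℝ × (Fin n → ℝ) => V q.1 q.2) p‖ ≤ B)
    (T R : ℝ) (hT : 0 < T) :
    ∃ M : ℝ, ∀ x y : Fin n → ℝ, ‖x - y‖ ≤ R → ∀ t : ℝ,
      ∀ γ : ℝ → (Fin n → ℝ), ContDiff ℝ 2 γ → γ t = x → γ (t + T) = y →
      -- γ solves the Euler–Lagrange equation d/ds ∂_v L = ∂_x L on [t, t+T]
      (∀ s ∈ Set.Icc t (t + T),
        HasDerivAt (fun σ => fderiv ℝ Kstar (deriv γ σ))
          (-(fderiv ℝ (fun z => V s z) (γ s))) s) →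
      -- γ minimizes the action among absolutely continuous curves from x to y
      (∀ η d : ℝ → (Fin n → ℝ), η t = x → η (t + T) = y →
        IntervalIntegrable d volume t (t + T) →
        (∀ s1 ∈ Set.Icc t (t + T), ∀ s2 ∈ Set.Icc t (t + T), s1 ≤ s2 →
          η s2 - η s1 = ∫ s in s1..s2, d s) →
        IntervalIntegrable (fun s => Kstar (d s) - V s (η s)) volume t (t + T) →
        (∫ s in t..(t + T), (Kstar (deriv γ s) - V s (γ s))) ≤
          ∫ s in t..(t + T), (Kstar (d s) - V s (η s))) →
      ∀ s ∈ Set.Icc t (t + T), ‖deriv γ s‖ ≤ M := by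
  have hforce : ∀ σ z, ‖fderiv ℝ (fun z => V σ z) z‖ ≤ B := fun σ z =>
    (norm_fderiv_slice_le (W := fun q : ℝ × (Fin n → ℝ) => V q.1 q.2)
      ((hV.differentiable two_ne_zero) (σ, z))).trans (by simpa using hVb 1 one_le_two (σ, z))
  refine ⟨R / T + B * T / c, fun x y hxy t γ hγ hγt hγT hEL _ s hs => ?_⟩
  have hmomentum : ∀ σ ∈ Icc t (t + T),
      ‖fderiv ℝ Kstar (deriv γ σ) - fderiv ℝ Kstar (deriv γ s)‖ ≤ B * T := fun σ hσ => by
    simpa using norm_image_sub_le_of_norm_deriv_le_Icc hEL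
      (fun σ _ => (norm_neg _).trans_le (hforce σ (γ σ))) hs hσ
  have hvelocity : ∀ σ ∈ Icc t (t + T), ‖deriv γ σ - deriv γ s‖ ≤ B * T / c := fun σ hσ => by
    rw [le_div_iff₀' hc]
    exact (mul_norm_sub_le_norm_fderiv_sub hK hKconv _ _).trans (hmomentum σ hσ)
  have hspeed := mul_norm_deriv_le_of_norm_deriv_sub_le
    (fun σ _ => (hγ.differentiable two_ne_zero).differentiableAt) hs hvelocity
  rw [hγt, hγT, norm_sub_rev, add_sub_cancel_left] at hspeed
  rw [div_add' _ _ _ hT.ne', le_div_iff₀' hT]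
  linarith

/-- A priori bound on the velocity of minimizers: for `L(t,x,v) = K*(v) − V(t,x)`
with `K*` C² uniformly strictly convex and `V` C² with bounded derivatives up to
order 2, for all `T, R > 0` there is `M = M(R,T)` such that any C² solution of the
Euler–Lagrange equation joining `x` to `y` with `‖x - y‖ ≤ R` in time `T`, which
minimizes the action among absolutely continuous curves with the same endpoints,
has velocity bounded by `M`. -/
theorem velocity_bound_of_minimizer (n : ℕ)
    (Kstar : (Fin n → ℝ) → ℝ) (V : ℝ → (Fin n → ℝ) → ℝ)
    (hK : ContDiff ℝ 2 Kstar) (c : ℝ) (hc : 0 < c)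
    (hKconv : ∀ v Y : Fin n → ℝ, c * ‖Y‖ ^ 2 ≤ iteratedFDeriv ℝ 2 Kstar v ![Y, Y])
    (B : ℝ) (hV : ContDiff ℝ 2 fun p : ℝ × (Fin n → ℝ) => V p.1 p.2)
    (hVb : ∀ j ≤ 2, ∀ p : ℝ × (Fin n → ℝ),
      ‖iteratedFDeriv ℝ j (fun q : ℝ × (Fin n → ℝ) => V q.1 q.2) p‖ ≤ B)
    (T R : ℝ) (hT : 0 < T) (hR : 0 < R) :
    ∃ M : ℝ, ∀ x y : Fin n → ℝ, ‖x - y‖ ≤ R → ∀ t : ℝ,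
      ∀ γ : ℝ → (Fin n → ℝ), ContDiff ℝ 2 γ → γ t = x → γ (t + T) = y →
      -- γ solves the Euler–Lagrange equation d/ds ∂_v L = ∂_x L on [t, t+T]
      (∀ s ∈ Set.Icc t (t + T),
        HasDerivAt (fun σ => fderiv ℝ Kstar (deriv γ σ))
          (-(fderiv ℝ (fun z => V s z) (γ s))) s) →
      -- γ minimizes the action among absolutely continuous curves from x to y
      (∀ η d : ℝ → (Fin n → ℝ), η t = x → η (t + T) = y →
        IntervalIntegrable d volume t (t + T) →
        (∀ s1 ∈ Set.Icc t (t + T), ∀ s2 ∈ Set.Icc t (t + T), s1 ≤ s2 →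
          η s2 - η s1 = ∫ s in s1..s2, d s) →
        IntervalIntegrable (fun s => Kstar (d s) - V s (η s)) volume t (t + T) →
        (∫ s in t..(t + T), (Kstar (deriv γ s) - V s (γ s))) ≤
          ∫ s in t..(t + T), (Kstar (d s) - V s (η s))) →
      ∀ s ∈ Set.Icc t (t + T), ‖deriv γ s‖ ≤ M :=
  velocity_bound_of_minimizer_general n Kstar V hK c hc hKconv B hV hVb T R hT
end

section
/- Superlinearity of the action: assume L(t,x,v) ≥ α(|v|)·|v| for a nonnegative nondecreasing function α with α(r) → ∞ as r → ∞, and L ≥ 0. Define A_T^t(x,y) = inf over absolutely continuous γ with γ(0)=x, γ(t)=y of ∫_0^t L(T+s, γ(s), γ'(s)) ds. Then A_T^t(x,y) ≥ α(|x−y|/(2t)) · |x−y|/2. -/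
open MeasureTheory

/-! Fix `c = ‖x - y‖ / (2t)`. Pointwise, `L(s, γ, γ') ≥ α(‖γ'‖)‖γ'‖ ≥ α(c) (‖γ'‖ - c)⁺`, and
`∫₀ᵗ (‖γ'‖ - c)⁺ ≥ ∫₀ᵗ ‖γ'‖ - ct ≥ ‖x - y‖ - ‖x - y‖/2`: outside the set where `‖γ'‖ ≥ c` the
curve travels at most `ct = ‖x - y‖/2`. -/

lemma mul_max_sub_le_mul_self {α : ℝ → ℝ} (hα0 : ∀ r, 0 ≤ α r) (hα : Monotone α)
    {c r : ℝ} (hc : 0 ≤ c) (hr : 0 ≤ r) : α c * max (r - c) 0 ≤ α r * r := by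
  rcases le_or_gt c r with hcr | hrc
  · calc α c * max (r - c) 0 ≤ α c * r :=
          mul_le_mul_of_nonneg_left (max_le (by linarith) hr) (hα0 c)
      _ ≤ α r * r := mul_le_mul_of_nonneg_right (hα hcr) hr
  · rw [max_eq_right (by linarith), mul_zero]
    exact mul_nonneg (hα0 r) hr

lemma norm_integral_sub_le_integral_max {Ω E : Type*} [MeasurableSpace Ω]
    [NormedAddCommGroup E] [NormedSpace ℝ E] {μ : Measure Ω} [IsFiniteMeasure μ]
    {d : Ω → E} (hd : Integrable d μ) (c : ℝ) :
    ‖∫ ω, d ω ∂μ‖ - c * μ.real Set.univ ≤ ∫ ω, max (‖d ω‖ - c) 0 ∂μ :=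
  calc ‖∫ ω, d ω ∂μ‖ - c * μ.real Set.univ ≤ ∫ ω, ‖d ω‖ ∂μ - c * μ.real Set.univ := by
        gcongr; exact norm_integral_le_integral_norm d
    _ = ∫ ω, (‖d ω‖ - c) ∂μ := by
        rw [integral_sub hd.norm (integrable_const c), integral_const, smul_eq_mul, mul_comm]
    _ ≤ ∫ ω, max (‖d ω‖ - c) 0 ∂μ :=
        integral_mono (hd.norm.sub (integrable_const c))
          (hd.norm.sub (integrable_const c)).pos_part fun ω => le_max_left _ _

lemma mul_norm_integral_sub_le_integral {Ω E : Type*} [MeasurableSpace Ω]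
    [NormedAddCommGroup E] [NormedSpace ℝ E] {μ : Measure Ω} [IsFiniteMeasure μ]
    {α : ℝ → ℝ} (hα0 : ∀ r, 0 ≤ α r) (hα : Monotone α) {d : Ω → E} {ℓ : Ω → ℝ}
    (hd : Integrable d μ) (hℓ : Integrable ℓ μ) (hdℓ : ∀ ω, α ‖d ω‖ * ‖d ω‖ ≤ ℓ ω)
    {c : ℝ} (hc : 0 ≤ c) :
    α c * (‖∫ ω, d ω ∂μ‖ - c * μ.real Set.univ) ≤ ∫ ω, ℓ ω ∂μ :=
  calc α c * (‖∫ ω, d ω ∂μ‖ - c * μ.real Set.univ)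
      ≤ α c * ∫ ω, max (‖d ω‖ - c) 0 ∂μ :=
        mul_le_mul_of_nonneg_left (norm_integral_sub_le_integral_max hd c) (hα0 c)
    _ = ∫ ω, α c * max (‖d ω‖ - c) 0 ∂μ := (integral_const_mul _ _).symm
    _ ≤ ∫ ω, ℓ ω ∂μ :=
        integral_mono ((hd.norm.sub (integrable_const c)).pos_part.const_mul _) hℓ fun ω =>
          (mul_max_sub_le_mul_self hα0 hα hc (norm_nonneg _)).trans (hdℓ ω)

lemma mul_half_norm_intervalIntegral_le {E : Type*} [NormedAddCommGroup E] [NormedSpace ℝ E]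
    {α : ℝ → ℝ} (hα0 : ∀ r, 0 ≤ α r) (hα : Monotone α) {d : ℝ → E} {ℓ : ℝ → ℝ} {t : ℝ}
    (ht : 0 < t) (hd : IntervalIntegrable d volume 0 t) (hℓ : IntervalIntegrable ℓ volume 0 t)
    (hdℓ : ∀ s, α ‖d s‖ * ‖d s‖ ≤ ℓ s) :
    α (‖∫ s in 0..t, d s‖ / (2 * t)) * (‖∫ s in 0..t, d s‖ / 2) ≤ ∫ s in 0..t, ℓ s := by
  rw [intervalIntegral.integral_of_le ht.le, intervalIntegral.integral_of_le ht.le]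
  have hμ : (volume.restrict (Set.Ioc 0 t)).real Set.univ = t := by
    simp [ht.le]
  set I := ‖∫ s in Set.Ioc 0 t, d s‖
  have hhalf : I - I / (2 * t) * t = I / 2 := by field_simp; ring
  have hbound := mul_norm_integral_sub_le_integral hα0 hα hd.1 hℓ.1 hdℓ
    (c := I / (2 * t)) (by positivity)
  rwa [hμ, hhalf] at hbound

theorem action_superlinear_general (n : ℕ) (L : ℝ → (Fin n → ℝ) → (Fin n → ℝ) → ℝ)
    (hLc : Continuous fun p : ℝ × (Fin n → ℝ) × (Fin n → ℝ) => L p.1 p.2.1 p.2.2)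
    (α : ℝ → ℝ) (hα0 : ∀ r, 0 ≤ α r) (hαmono : Monotone α)
    (hsup : ∀ (s : ℝ) (x v : Fin n → ℝ), α ‖v‖ * ‖v‖ ≤ L s x v)
    (T t : ℝ) (ht : 0 < t) (x y : Fin n → ℝ) :
    α (‖x - y‖ / (2 * t)) * (‖x - y‖ / 2) ≤
      sInf {r : ℝ | ∃ γ d : ℝ → (Fin n → ℝ),
        γ 0 = x ∧ γ t = y ∧
        (∀ s1 ∈ Set.Icc (0 : ℝ) t, ∀ s2 ∈ Set.Icc (0 : ℝ) t, s1 ≤ s2 →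
          γ s2 - γ s1 = ∫ s in s1..s2, d s) ∧
        IntervalIntegrable d volume 0 t ∧
        IntervalIntegrable (fun s => L (T + s) (γ s) (d s)) volume 0 t ∧
        r = ∫ s in (0 : ℝ)..t, L (T + s) (γ s) (d s)} := by
  refine le_csInf ?_ ?_
  · -- the straight segment is admissible, so the infimum is not the junk value `sInf ∅ = 0`
    refine ⟨_, fun s => x + (s / t) • (y - x), fun _ => t⁻¹ • (y - x), by simp,
      by simp [ht.ne'], ?_, intervalIntegrable_const, ?_, rfl⟩
    · intro s1 _ s2 _ _
      rw [intervalIntegral.integral_const, smul_smul]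
      module
    · have hsegment : Continuous fun s : ℝ =>
          (T + s, x + (s / t) • (y - x), t⁻¹ • (y - x)) := by fun_prop
      exact (hLc.comp hsegment).intervalIntegrable 0 t
  · rintro r ⟨γ, d, hγ0, hγt, hγd, hd, hL, rfl⟩
    have hdisp : ∫ s in 0..t, d s = y - x := by
      simpa [hγ0, hγt] using (hγd 0 ⟨le_rfl, ht.le⟩ t ⟨ht.le, le_rfl⟩ ht.le).symm
    rw [norm_sub_rev, ← hdisp]
    exact mul_half_norm_intervalIntegral_le hα0 hαmono ht hd hL fun s => hsup _ _ _

/-- Superlinearity of the action: if `L ≥ 0` and `L(s,x,v) ≥ α(‖v‖)·‖v‖` with `α`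
nonnegative, nondecreasing and tending to `∞`, then the minimal action
`A_T^t(x,y)` over absolutely continuous curves from `x` to `y` in time `t`
satisfies `A_T^t(x,y) ≥ α(‖x−y‖/(2t)) · ‖x−y‖/2`. -/
theorem action_superlinear (n : ℕ) (L : ℝ → (Fin n → ℝ) → (Fin n → ℝ) → ℝ)
    (hLc : Continuous fun p : ℝ × (Fin n → ℝ) × (Fin n → ℝ) => L p.1 p.2.1 p.2.2)
    (α : ℝ → ℝ) (hα0 : ∀ r, 0 ≤ α r) (hαmono : Monotone α)
    (hαtop : Filter.Tendsto α Filter.atTop Filter.atTop)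
    (hsup : ∀ (s : ℝ) (x v : Fin n → ℝ), α ‖v‖ * ‖v‖ ≤ L s x v)
    (hL0 : ∀ (s : ℝ) (x v : Fin n → ℝ), 0 ≤ L s x v)
    (T t : ℝ) (ht : 0 < t) (x y : Fin n → ℝ) :
    α (‖x - y‖ / (2 * t)) * (‖x - y‖ / 2) ≤
      sInf {r : ℝ | ∃ γ d : ℝ → (Fin n → ℝ),
        γ 0 = x ∧ γ t = y ∧
        (∀ s1 ∈ Set.Icc (0 : ℝ) t, ∀ s2 ∈ Set.Icc (0 : ℝ) t, s1 ≤ s2 →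
          γ s2 - γ s1 = ∫ s in s1..s2, d s) ∧
        IntervalIntegrable d volume 0 t ∧
        IntervalIntegrable (fun s => L (T + s) (γ s) (d s)) volume 0 t ∧
        r = ∫ s in (0 : ℝ)..t, L (T + s) (γ s) (d s)} :=
  action_superlinear_general n L hLc α hα0 hαmono hsup T t ht x y
end

section
/- Uniqueness of the discrete critical value: let c : G × G → ℝ be a cost on a finite set G, bounded below, and suppose there exist constants H̄₁, H̄₂ and functions u₁, u₂ : G → ℝ with (inf_{y} u₁(y) + c(y,x)) = u₁(x) + H̄₁ and (inf_y u₂(y) + c(y,x)) = u₂(x) + H̄₂ for all x ∈ G. Then H̄₁ = H̄₂. -/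
private lemma discrete_critical_value_le (G : Type*) [Fintype G] [Nonempty G]
    (c : G → G → ℝ)
    (u₁ u₂ : G → ℝ) (H₁ H₂ : ℝ)
    (h1 : ∀ x, (⨅ y, (u₁ y + c y x)) = u₁ x + H₁)
    (h2 : ∀ x, (⨅ y, (u₂ y + c y x)) = u₂ x + H₂) :
    H₂ ≤ H₁ := by
  obtain ⟨x₀, hx₀⟩ := Finite.exists_min (fun x => u₁ x - u₂ x)
  set d := u₁ x₀ - u₂ x₀ with hd
  have key : u₁ x₀ + H₂ ≤ u₁ x₀ + H₁ := by
    rw [← h1 x₀]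
    have step1 : (⨅ y, (d + (u₂ y + c y x₀))) ≤ ⨅ y, (u₁ y + c y x₀) := by
      apply ciInf_mono (Finite.bddBelow_range _)
      intro y
      have := hx₀ y
      simp only [hd] at this ⊢
      linarith
    have step2 : (⨅ y, (d + (u₂ y + c y x₀))) = d + ⨅ y, (u₂ y + c y x₀) := by
      rw [← add_ciInf (Finite.bddBelow_range _)]
    rw [step2, h2 x₀, hd] at step1
    linarith
  linarith

/-- Uniqueness of the discrete critical value: on a finite set `G` with a cost
`c : G × G → ℝ` bounded below, if two constants `H̄₁, H̄₂` admit functions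
`u₁, u₂ : G → ℝ` with `inf_y (uₖ(y) + c(y,x)) = uₖ(x) + H̄ₖ` for all `x`, then
`H̄₁ = H̄₂`. -/
theorem discrete_critical_value_unique (G : Type*) [Fintype G] [Nonempty G]
    (c : G → G → ℝ) (hbd : ∃ m : ℝ, ∀ y x, m ≤ c y x)
    (u₁ u₂ : G → ℝ) (H₁ H₂ : ℝ)
    (h1 : ∀ x, (⨅ y, (u₁ y + c y x)) = u₁ x + H₁)
    (h2 : ∀ x, (⨅ y, (u₂ y + c y x)) = u₂ x + H₂) :
    H₁ = H₂ := by
  exact le_antisymm (discrete_critical_value_le G c u₂ u₁ H₂ H₁ h2 h1)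
    (discrete_critical_value_le G c u₁ u₂ H₁ H₂ h1 h2)
end
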